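/- For every r ≥ 2 and t ≥ 1, if H = (t−1)·K_{1,3(r−1)} is the disjoint union of t−1 stars each with 3(r−1) edges, then there exists f: E(H) → E(H) with f(e) ≠ e and |f(e) ∩ e| ≤ 1 for all e, such that H contains no f-free copy of K_{1,r}; moreover H contains no tK₂. Consequently, if r ≥ 2t+1 and ex(n, {K_{1,r}, tK₂}) = (r−1)(t−1), then h(n, {K_{1,r}, tK₂}) = 3(r−1)(t−1) for all n ≥ (t−1)(3r−2). -/

import Mathlib

/-!
The upper bound is the Alon–Caro argument. A fixed-point-free self-map `f` of a finite set `E`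
has an `f`-free subset with at least `|E| / 3` elements: keep an element that is the image of at
most one element of `E`, discard it together with its image and that preimage, and recurse. An
`f`-free set of edges of `H` spans a graph with no copy of `G` at all, so it has at most
`ex(n, 𝓖)` edges.

For the lower bound, the `3(r - 1)` leaves of each star are split into `r - 1` triples and `f`
rotates the leaf of an edge inside its triple. Any `r` leaves at one centre include two from the
same triple, so one of the two edges is the image of the other. Every edge of the forest meets
one of its `t - 1` centres, so the forest has no `tK₂`.
-/

open SimpleGraph

variable {V W : Type*}

/-- Two `Sym2` elements (edges) are vertex-disjoint. -/
def sym2Disjoint (e e' : Sym2 V) : Prop := ∀ v, v ∈ e → v ∉ e'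

/-- Edge set of the copy of `G` in `H` given by an (injective) homomorphism. -/
def copyEdges (G : SimpleGraph V) (H : SimpleGraph W) (φ : G →g H) : Set (Sym2 W) :=
  Sym2.map φ '' G.edgeSet

/-- The edge set `E` is `f`-free. -/
def IsFreeSet (f : Sym2 W → Sym2 W) (E : Set (Sym2 W)) : Prop := ∀ e ∈ E, f e ∉ E

/-- `f` is an edge mapping of `H` with `f e ≠ e` (equivalently `|f e ∩ e| ≤ 1`). -/
def IsEdgeMap (H : SimpleGraph W) (f : Sym2 W → Sym2 W) : Prop :=
  ∀ e ∈ H.edgeSet, f e ∈ H.edgeSet ∧ f e ≠ e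

/-- `f` is an edge mapping of `H` with `f e ∩ e = ∅`. -/
def IsDisjEdgeMap (H : SimpleGraph W) (f : Sym2 W → Sym2 W) : Prop :=
  ∀ e ∈ H.edgeSet, f e ∈ H.edgeSet ∧ sym2Disjoint e (f e)

/-- `H` contains a copy of `G` (as a not necessarily induced subgraph). -/
def Contains (G : SimpleGraph V) (H : SimpleGraph W) : Prop :=
  ∃ φ : G →g H, Function.Injective φ

/-- `H` has no `f`-free copy of `G`. -/
def NoFreeCopy (G : SimpleGraph V) (H : SimpleGraph W) (f : Sym2 W → Sym2 W) : Prop :=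
  ∀ φ : G →g H, Function.Injective φ → ¬ IsFreeSet f (copyEdges G H φ)

/-- The Turán number `ex(n, G)`. -/
noncomputable def exNum (n : ℕ) (G : SimpleGraph V) : ℕ :=
  sSup {m | ∃ H : SimpleGraph (Fin n), H.edgeSet.ncard = m ∧ ¬ Contains G H}

/-- The parameter `h(n, G)`. -/
noncomputable def hNum (n : ℕ) (G : SimpleGraph V) : ℕ :=
  sSup {m | ∃ (H : SimpleGraph (Fin n)) (f : Sym2 (Fin n) → Sym2 (Fin n)),
    H.edgeSet.ncard = m ∧ IsEdgeMap H f ∧ NoFreeCopy G H f}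

/-- Independence number. -/
noncomputable def indepNum (G : SimpleGraph V) [Fintype V] : ℕ :=
  sSup {m | ∃ s : Finset V, (∀ v ∈ s, ∀ w ∈ s, ¬ G.Adj v w) ∧ s.card = m}

/-- The matching `tK₂` on `Fin (2t)`: vertices `2i, 2i+1` are matched. -/
def matching (t : ℕ) : SimpleGraph (Fin (2*t)) :=
  SimpleGraph.fromRel (fun v w => (v : ℕ) / 2 = (w : ℕ) / 2)

/-- The star `K_{1,r}` on `Fin (r+1)`, with center `0`. -/
def starG (r : ℕ) : SimpleGraph (Fin (r+1)) :=
  SimpleGraph.fromRel (fun v _ => v = 0)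

/-- The disjoint union of `t-1` stars, each with `3(r-1)` edges, on
`Fin ((t-1)*(3r-2))`; the center of each block of `3r-2` consecutive vertices is
the first vertex of the block. -/
def starForest (t r : ℕ) : SimpleGraph (Fin ((t-1)*(3*r-2))) :=
  SimpleGraph.fromRel
    (fun v w => (v : ℕ)/(3*r-2) = (w : ℕ)/(3*r-2) ∧ (v : ℕ) % (3*r-2) = 0)

/-- Turán number for a family of two graphs. -/
noncomputable def exNum2 {V W : Type*} (n : ℕ) (G₁ : SimpleGraph V)
    (G₂ : SimpleGraph W) : ℕ :=
  sSup {m | ∃ H : SimpleGraph (Fin n),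
    H.edgeSet.ncard = m ∧ ¬ Contains G₁ H ∧ ¬ Contains G₂ H}

/-- `h` for a family of two graphs. -/
noncomputable def hNum2 {V W : Type*} (n : ℕ) (G₁ : SimpleGraph V)
    (G₂ : SimpleGraph W) : ℕ :=
  sSup {m | ∃ (H : SimpleGraph (Fin n)) (f : Sym2 (Fin n) → Sym2 (Fin n)),
    H.edgeSet.ncard = m ∧ IsEdgeMap H f ∧ NoFreeCopy G₁ H f ∧ NoFreeCopy G₂ H f}


open Finset

theorem exists_free_subset_card_le_three_mul {α : Type*} [DecidableEq α] (f : α → α)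
    (E : Finset α) (hf : ∀ e ∈ E, f e ≠ e) :
    ∃ S ⊆ E, (∀ e ∈ S, f e ∉ S) ∧ #E ≤ 3 * #S := by
  induction E using Finset.strongInduction with
  | H E ih =>
  obtain rfl | hE := E.eq_empty_or_nonempty
  · exact ⟨∅, subset_rfl, by simp, by simp⟩
  -- pigeonhole: at most `#E` elements of `E` lie in the `#E` fibres of `f` over points of `E`
  obtain ⟨e₀, he₀, hfib⟩ :=
    exists_card_fiber_le_of_card_le_mul (s := E) (f := f) (n := 1) hE (by simp)
  set T := insert e₀ (insert (f e₀) {e ∈ E | f e = e₀})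
  have hT : #T ≤ 3 := by
    grw [card_insert_le, card_insert_le, hfib]
  obtain ⟨S, hSE, hSfree, hScard⟩ := ih (E \ T)
    ((ssubset_iff_of_subset sdiff_subset).2 ⟨e₀, he₀, by simp [T]⟩)
    (fun e he => hf e (mem_sdiff.1 he).1)
  have hST : ∀ e ∈ S, e ∉ T := fun e he => (mem_sdiff.1 (hSE he)).2
  have he₀S : e₀ ∉ S := fun h => hST e₀ h (by simp [T])
  refine ⟨insert e₀ S, insert_subset he₀ (hSE.trans sdiff_subset), ?_, ?_⟩
  · rintro e he hfe
    rcases mem_insert.1 he with rfl | he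
    · rcases mem_insert.1 hfe with hfe | hfe
      · exact hf e he₀ hfe
      · exact hST _ hfe (by simp [T])
    · rcases mem_insert.1 hfe with hfe | hfe
      · exact hST e he (by simp [T, hfe, (mem_sdiff.1 (hSE he)).1])
      · exact hSfree e he hfe
  · have := card_le_card_sdiff_add_card (s := E) (t := T)
    rw [card_insert_of_notMem he₀S]
    omega

variable {U : Type*}

lemma le_exNum2 {n : ℕ} {G₁ : SimpleGraph V} {G₂ : SimpleGraph U} {H : SimpleGraph (Fin n)}
    (h₁ : ¬ Contains G₁ H) (h₂ : ¬ Contains G₂ H) : H.edgeSet.ncard ≤ exNum2 n G₁ G₂ :=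
  le_csSup ⟨Nat.card (Sym2 (Fin n)), by rintro _ ⟨H, rfl, -⟩; exact Set.ncard_le_card _⟩
    ⟨H, rfl, h₁, h₂⟩

lemma le_hNum2 {n : ℕ} {G₁ : SimpleGraph V} {G₂ : SimpleGraph U} {H : SimpleGraph (Fin n)}
    {f : Sym2 (Fin n) → Sym2 (Fin n)} (hf : IsEdgeMap H f) (h₁ : NoFreeCopy G₁ H f)
    (h₂ : NoFreeCopy G₂ H f) : H.edgeSet.ncard ≤ hNum2 n G₁ G₂ :=
  le_csSup ⟨Nat.card (Sym2 (Fin n)), by rintro _ ⟨H, -, rfl, -⟩; exact Set.ncard_le_card _⟩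
    ⟨H, f, rfl, hf, h₁, h₂⟩

lemma NoFreeCopy.not_contains_fromEdgeSet {G : SimpleGraph V} {H : SimpleGraph W}
    {f : Sym2 W → Sym2 W} (h : NoFreeCopy G H f) {S : Set (Sym2 W)} (hS : S ⊆ H.edgeSet)
    (hfree : IsFreeSet f S) : ¬ Contains G (fromEdgeSet S) := by
  rintro ⟨φ, hφ⟩
  have hle : fromEdgeSet S ≤ H := fun v w hvw => hS ((fromEdgeSet_adj S).1 hvw).1
  have hsub : copyEdges G H ((Hom.ofLE hle).comp φ) ⊆ S := by
    rintro _ ⟨e₀, he₀, rfl⟩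
    induction e₀ using Sym2.ind with
    | _ a b => exact ((fromEdgeSet_adj S).1 (φ.map_adj he₀)).1
  exact h _ hφ fun e he hfe => hfree e (hsub he) (hsub hfe)

theorem hNum2_le_three_mul_exNum2 (n : ℕ) (G₁ : SimpleGraph V) (G₂ : SimpleGraph U) :
    hNum2 n G₁ G₂ ≤ 3 * exNum2 n G₁ G₂ := by
  classical
  refine csSup_le' ?_
  rintro _ ⟨H, f, rfl, hf, h₁, h₂⟩
  obtain ⟨S, hSE, hSfree, hcard⟩ := exists_free_subset_card_le_three_mul f H.edgeFinset
    fun e he => (hf e (mem_edgeFinset.1 he)).2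
  have hS : (S : Set (Sym2 (Fin n))) ⊆ H.edgeSet := fun e he => mem_edgeFinset.1 (hSE he)
  have hedges : (fromEdgeSet (S : Set (Sym2 (Fin n)))).edgeSet = S := by
    rw [edgeSet_fromEdgeSet, sdiff_eq_left, Set.disjoint_left]
    exact fun e he => H.not_isDiag_of_mem_edgeSet (hS he)
  calc H.edgeSet.ncard = #H.edgeFinset := by rw [← coe_edgeFinset, Set.ncard_coe_finset]
    _ ≤ 3 * (fromEdgeSet (S : Set (Sym2 (Fin n)))).edgeSet.ncard := by
      rwa [hedges, Set.ncard_coe_finset]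
    _ ≤ 3 * exNum2 n G₁ G₂ := Nat.mul_le_mul_left 3 <|
      le_exNum2 (h₁.not_contains_fromEdgeSet hS hSfree) (h₂.not_contains_fromEdgeSet hS hSfree)

lemma exists_lift_of_hom_map {G : SimpleGraph V} (hG : ∀ v, ∃ w, G.Adj v w)
    {H : SimpleGraph U} (ι : U ↪ W) (φ : G →g H.map ι) : ∃ ψ : G →g H, ∀ v, ι (ψ v) = φ v := by
  have hrange : ∀ v, ∃ u, ι u = φ v := fun v => by
    obtain ⟨w, hw⟩ := hG v
    obtain ⟨u, -, -, hu, -⟩ := (map_adj ι H _ _).1 (φ.map_adj hw)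
    exact ⟨u, hu⟩
  choose ψ hψ using hrange
  refine ⟨⟨ψ, fun {v w} hvw => ?_⟩, hψ⟩
  obtain ⟨a, b, hab, ha, hb⟩ := (map_adj ι H _ _).1 (φ.map_adj hvw)
  rwa [ι.injective (ha.trans (hψ v).symm), ι.injective (hb.trans (hψ w).symm)] at hab

noncomputable def extendEdgeMap (ι : U ↪ W) (f : Sym2 U → Sym2 U) : Sym2 W → Sym2 W :=
  Function.extend (Sym2.map ι) (Sym2.map ι ∘ f) id

lemma extendEdgeMap_map (ι : U ↪ W) (f : Sym2 U → Sym2 U) (e : Sym2 U) :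
    extendEdgeMap ι f (Sym2.map ι e) = Sym2.map ι (f e) :=
  (Sym2.map.injective ι.injective).extend_apply _ _ e

lemma IsEdgeMap.map {H : SimpleGraph U} {f : Sym2 U → Sym2 U} (hf : IsEdgeMap H f)
    (ι : U ↪ W) : IsEdgeMap (H.map ι) (extendEdgeMap ι f) := by
  rw [IsEdgeMap, edgeSet_map]
  rintro _ ⟨e, he, rfl⟩
  rw [Function.Embedding.sym2Map_apply, extendEdgeMap_map]
  exact ⟨⟨f e, (hf e he).1, rfl⟩, fun h => (hf e he).2 (Sym2.map.injective ι.injective h)⟩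

lemma copyEdges_map {G : SimpleGraph V} {H : SimpleGraph U} (ι : U ↪ W) (φ : G →g H.map ι)
    (ψ : G →g H) (hψ : ∀ v, ι (ψ v) = φ v) :
    copyEdges G (H.map ι) φ = Sym2.map ι '' copyEdges G H ψ := by
  rw [copyEdges, copyEdges, Set.image_image]
  congr! with e
  rw [Sym2.map_map]
  congr
  exact funext fun v => (hψ v).symm

lemma NoFreeCopy.map {G : SimpleGraph V} (hG : ∀ v, ∃ w, G.Adj v w) {H : SimpleGraph U}
    {f : Sym2 U → Sym2 U} (h : NoFreeCopy G H f) (ι : U ↪ W) :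
    NoFreeCopy G (H.map ι) (extendEdgeMap ι f) := by
  intro φ hφ hfree
  obtain ⟨ψ, hψ⟩ := exists_lift_of_hom_map hG ι φ
  refine h ψ (fun v w hvw => hφ (by rw [← hψ, ← hψ, hvw])) fun e he hfe => ?_
  rw [copyEdges_map ι φ ψ hψ] at hfree
  exact hfree _ ⟨e, he, rfl⟩ (extendEdgeMap_map ι f e ▸ ⟨f e, hfe, rfl⟩)

lemma NoFreeCopy.of_not_contains {G : SimpleGraph V} {H : SimpleGraph W} (h : ¬ Contains G H)
    (f : Sym2 W → Sym2 W) : NoFreeCopy G H f :=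
  fun φ hφ _ => h ⟨φ, hφ⟩

lemma starG_adj {r : ℕ} {v w : Fin (r + 1)} : (starG r).Adj v w ↔ v ≠ w ∧ (v = 0 ∨ w = 0) := by
  simp [starG]

lemma starG_exists_adj {r : ℕ} (hr : 1 ≤ r) (v : Fin (r + 1)) : ∃ w, (starG r).Adj v w := by
  by_cases hv : v = 0
  · exact ⟨⟨1, by omega⟩, starG_adj.2 ⟨by simp [hv, Fin.ext_iff], Or.inl hv⟩⟩
  · exact ⟨0, starG_adj.2 ⟨hv, Or.inr rfl⟩⟩

lemma matching_adj {t : ℕ} {v w : Fin (2 * t)} :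
    (matching t).Adj v w ↔ v ≠ w ∧ (v : ℕ) / 2 = w / 2 := by
  simp [matching, eq_comm]

lemma matching_exists_adj {t : ℕ} (v : Fin (2 * t)) : ∃ w, (matching t).Adj v w :=
  ⟨⟨2 * (v / 2) + (1 - v % 2), by omega⟩,
    matching_adj.2 ⟨by simp [Fin.ext_iff]; omega, by simp; omega⟩⟩

lemma noFreeCopy_starG_of_forall {r : ℕ} {H : SimpleGraph W} {f : Sym2 W → Sym2 W}
    (h : ∀ (c : W) (g : Fin r ↪ W), (∀ i, H.Adj c (g i)) → ∃ i j, f s(c, g i) = s(c, g j)) :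
    NoFreeCopy (starG r) H f := by
  intro φ hφ hfree
  have hedge : ∀ i : Fin r, s(φ 0, φ i.succ) ∈ copyEdges (starG r) H φ := fun i =>
    ⟨s(0, i.succ), starG_adj.2 ⟨(Fin.succ_ne_zero i).symm, Or.inl rfl⟩, rfl⟩
  obtain ⟨i, j, hij⟩ := h (φ 0) ⟨fun i => φ i.succ, fun i j hij => Fin.succ_injective _ (hφ hij)⟩
    fun i => φ.map_adj (starG_adj.2 ⟨(Fin.succ_ne_zero i).symm, Or.inl rfl⟩)
  exact hfree _ (hedge i) (hij ▸ hedge j)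

lemma not_contains_matching_of_forall_adj_mem {t : ℕ} {H : SimpleGraph W} (C : Finset W)
    (hC : ∀ v w, H.Adj v w → v ∈ C ∨ w ∈ C) (hcard : #C < t) : ¬ Contains (matching t) H := by
  classical
  rintro ⟨φ, hφ⟩
  set S : Finset (Fin (2 * t)) := {v | φ v ∈ C}
  have hpairs : range t ⊆ S.image fun v : Fin (2 * t) => (v : ℕ) / 2 := by
    intro i hi
    rw [mem_range] at hi
    have hadj : (matching t).Adj ⟨2 * i, by omega⟩ ⟨2 * i + 1, by omega⟩ :=
      matching_adj.2 ⟨by simp [Fin.ext_iff], by simp; omega⟩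
    rcases hC _ _ (φ.map_adj hadj) with h | h
    · exact mem_image.2 ⟨_, by simpa [S] using h, by simp⟩
    · exact mem_image.2 ⟨_, by simpa [S] using h, by simp; omega⟩
  have : t ≤ #C := calc
    t = #(range t) := (card_range t).symm
    _ ≤ #(S.image fun v : Fin (2 * t) => (v : ℕ) / 2) := card_le_card hpairs
    _ ≤ #S := card_image_le
    _ ≤ #C := card_le_card_of_injOn φ (fun v hv => by simpa [S] using hv) hφ.injOn
  omega

section Blocks

variable {m q : ℕ}

def blockCenter (v : Fin (m * q)) : Fin (m * q) :=
  ⟨v / q * q, (Nat.div_mul_le_self _ _).trans_lt v.isLt⟩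

lemma pos_of_fin_mul (v : Fin (m * q)) : 0 < q :=
  Nat.pos_of_mul_pos_left (Nat.zero_lt_of_lt v.isLt)

lemma div_lt_of_fin_mul (v : Fin (m * q)) : (v : ℕ) / q < m :=
  Nat.div_lt_of_lt_mul (v.isLt.trans_eq (mul_comm m q))

lemma blockCenter_mod (v : Fin (m * q)) : (blockCenter v : ℕ) % q = 0 :=
  Nat.mul_mod_left _ _

lemma blockCenter_div (v : Fin (m * q)) : (blockCenter v : ℕ) / q = v / q :=
  Nat.mul_div_cancel _ (pos_of_fin_mul v)

lemma blockCenter_add_lt (v : Fin (m * q)) {s : ℕ} (hs : s < q) : (blockCenter v : ℕ) + s < m * q :=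
  calc v / q * q + s < (v / q + 1) * q := by rw [add_mul, one_mul]; omega
    _ ≤ m * q := Nat.mul_le_mul_right q (div_lt_of_fin_mul v)

lemma blockCenter_add_div (v : Fin (m * q)) {s : ℕ} (hs : s < q) :
    ((blockCenter v : ℕ) + s) / q = v / q := by
  rw [blockCenter, add_comm, Nat.add_mul_div_right _ _ (pos_of_fin_mul v), Nat.div_eq_of_lt hs,
    zero_add]

lemma blockCenter_add_mod (v : Fin (m * q)) {s : ℕ} (hs : s < q) :
    ((blockCenter v : ℕ) + s) % q = s := by
  rw [blockCenter, add_comm, Nat.add_mul_mod_self_right, Nat.mod_eq_of_lt hs]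

lemma eq_of_div_eq_of_mod_eq {v w : Fin (m * q)} (hd : (v : ℕ) / q = w / q)
    (hm : (v : ℕ) % q = w % q) : v = w :=
  Fin.ext (by rw [← Nat.div_add_mod' v q, hd, hm, Nat.div_add_mod'])

lemma eq_blockCenter_iff {v w : Fin (m * q)} :
    v = blockCenter w ↔ (v : ℕ) % q = 0 ∧ (v : ℕ) / q = w / q := by
  constructor
  · rintro rfl
    exact ⟨blockCenter_mod w, blockCenter_div w⟩
  · rintro ⟨hm, hd⟩
    exact eq_of_div_eq_of_mod_eq (by rw [hd, blockCenter_div]) (by rw [hm, blockCenter_mod])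

lemma blockCenter_eq_self_iff {v : Fin (m * q)} : blockCenter v = v ↔ (v : ℕ) % q = 0 := by
  rw [eq_comm, eq_blockCenter_iff, and_iff_left rfl]

lemma blockCenter_blockCenter (v : Fin (m * q)) : blockCenter (blockCenter v) = blockCenter v :=
  blockCenter_eq_self_iff.2 (blockCenter_mod v)

lemma blockCenter_eq_blockCenter_iff {v w : Fin (m * q)} :
    blockCenter v = blockCenter w ↔ (v : ℕ) / q = w / q := by
  rw [eq_blockCenter_iff, blockCenter_div, and_iff_right (blockCenter_mod v)]

lemma card_filter_blockCenter_eq_self (hq : 0 < q) :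
    #{v : Fin (m * q) | blockCenter v = v} = m := by
  refine (card_bij' (t := range m) (fun v _ => (v : ℕ) / q)
    (fun b hb => ⟨b * q, Nat.mul_lt_mul_of_pos_right (mem_range.1 hb) hq⟩) ?_ ?_ ?_ ?_ :
      #{v : Fin (m * q) | blockCenter v = v} = _).trans (card_range m)
  · exact fun v _ => mem_range.2 (div_lt_of_fin_mul v)
  · exact fun b _ => mem_filter.2 ⟨mem_univ _, blockCenter_eq_self_iff.2 (Nat.mul_mod_left _ _)⟩
  · exact fun v hv => (mem_filter.1 hv).2
  · exact fun b _ => Nat.mul_div_cancel _ hq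

end Blocks

-- Leaf positions `1, …, 3k` form the triples `{3i + 1, 3i + 2, 3i + 3}`, the triple of `p`
-- being `(p - 1) / 3`; `tripleSucc` rotates each triple.
def tripleSucc (p : ℕ) : ℕ := if p % 3 = 0 then p - 2 else p + 1

lemma tripleSucc_le {p k : ℕ} (h : p ≤ 3 * k) : tripleSucc p ≤ 3 * k := by
  unfold tripleSucc; split <;> omega

lemma tripleSucc_ne_zero {p : ℕ} (hp : p ≠ 0) : tripleSucc p ≠ 0 := by
  unfold tripleSucc; split <;> omega

lemma tripleSucc_ne_self {p : ℕ} (hp : p ≠ 0) : tripleSucc p ≠ p := by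
  unfold tripleSucc; split <;> omega

lemma tripleSucc_or_tripleSucc {p p' : ℕ} (hp : p ≠ 0) (hp' : p' ≠ 0) (hne : p ≠ p')
    (h : (p - 1) / 3 = (p' - 1) / 3) : tripleSucc p = p' ∨ tripleSucc p' = p := by
  unfold tripleSucc; split <;> split <;> omega

section LeafShift

variable {m r : ℕ}

lemma tripleSucc_mod_lt (v : Fin (m * (3 * r - 2))) :
    tripleSucc ((v : ℕ) % (3 * r - 2)) < 3 * r - 2 := by
  have hq := pos_of_fin_mul v
  have := tripleSucc_le (p := (v : ℕ) % (3 * r - 2)) (k := r - 1)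
    (by have := Nat.mod_lt v hq; omega)
  omega

-- Centres are fixed, since `tripleSucc 0 = 0`.
def leafShift (v : Fin (m * (3 * r - 2))) : Fin (m * (3 * r - 2)) :=
  ⟨blockCenter v + tripleSucc ((v : ℕ) % (3 * r - 2)), blockCenter_add_lt v (tripleSucc_mod_lt v)⟩

lemma leafShift_div (v : Fin (m * (3 * r - 2))) :
    (leafShift v : ℕ) / (3 * r - 2) = v / (3 * r - 2) :=
  blockCenter_add_div v (tripleSucc_mod_lt v)

lemma leafShift_mod (v : Fin (m * (3 * r - 2))) :
    (leafShift v : ℕ) % (3 * r - 2) = tripleSucc ((v : ℕ) % (3 * r - 2)) :=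
  blockCenter_add_mod v (tripleSucc_mod_lt v)

lemma blockCenter_leafShift (v : Fin (m * (3 * r - 2))) :
    blockCenter (leafShift v) = blockCenter v :=
  blockCenter_eq_blockCenter_iff.2 (leafShift_div v)

lemma leafShift_eq_of {v w : Fin (m * (3 * r - 2))} (hc : blockCenter v = blockCenter w)
    (h : tripleSucc ((v : ℕ) % (3 * r - 2)) = w % (3 * r - 2)) : leafShift v = w :=
  eq_of_div_eq_of_mod_eq (by rw [leafShift_div, blockCenter_eq_blockCenter_iff.1 hc])
    (by rw [leafShift_mod, h])

lemma leafShift_of_mod_eq_zero {v : Fin (m * (3 * r - 2))} (hv : (v : ℕ) % (3 * r - 2) = 0) :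
    leafShift v = v :=
  leafShift_eq_of rfl (by rw [hv]; rfl)

end LeafShift

section StarForest

variable {t r : ℕ}

lemma starForest_adj {v w : Fin ((t - 1) * (3 * r - 2))} :
    (starForest t r).Adj v w ↔ v ≠ w ∧ (v = blockCenter w ∨ w = blockCenter v) := by
  simp only [starForest, fromRel_adj, eq_blockCenter_iff]
  grind

lemma blockCenter_eq_of_adj {c w : Fin ((t - 1) * (3 * r - 2))} (hc : blockCenter c = c)
    (h : (starForest t r).Adj c w) : blockCenter w = c := by
  rcases starForest_adj.1 h with ⟨hne, h | h⟩
  · exact h.symm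
  · exact absurd (h.trans hc) hne.symm

lemma eq_blockCenter_of_adj {c w : Fin ((t - 1) * (3 * r - 2))} (hc : blockCenter c ≠ c)
    (h : (starForest t r).Adj c w) : w = blockCenter c := by
  rcases starForest_adj.1 h with ⟨-, h | h⟩
  · exact absurd (by rw [h, blockCenter_blockCenter]) hc
  · exact h

lemma edgeSet_starForest : (starForest t r).edgeSet =
    (fun l => s(blockCenter l, l)) '' {l | blockCenter l ≠ l} := by
  ext e
  induction e using Sym2.ind with
  | _ v w =>
  simp only [mem_edgeSet, starForest_adj, Set.mem_image, Set.mem_ofPred_eq]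
  constructor
  · rintro ⟨hvw, rfl | rfl⟩
    · exact ⟨w, hvw, rfl⟩
    · exact ⟨v, hvw.symm, Sym2.eq_swap⟩
  · rintro ⟨l, hl, h⟩
    rcases Sym2.eq_iff.1 h with ⟨rfl, rfl⟩ | ⟨rfl, rfl⟩
    · exact ⟨hl, Or.inl rfl⟩
    · exact ⟨Ne.symm hl, Or.inr rfl⟩

lemma ncard_edgeSet_starForest (hr : 1 ≤ r) :
    (starForest t r).edgeSet.ncard = 3 * ((r - 1) * (t - 1)) := by
  classical
  have hinj : Set.InjOn (fun l : Fin ((t - 1) * (3 * r - 2)) => s(blockCenter l, l))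
      {l | blockCenter l ≠ l} := by
    intro l _ l' hl' h
    rcases Sym2.eq_iff.1 h with ⟨-, h⟩ | ⟨h, -⟩
    · exact h
    · exact absurd (by rw [← h, blockCenter_blockCenter]) hl'
  rw [edgeSet_starForest, hinj.ncard_image, Set.ncard_eq_toFinset_card',
    Set.toFinset_ofPred]
  have hsplit := card_filter_add_card_filter_not (s := univ)
    fun l : Fin ((t - 1) * (3 * r - 2)) => blockCenter l = l
  rw [card_filter_blockCenter_eq_self (by omega), card_univ, Fintype.card_fin] at hsplit
  obtain ⟨k, rfl⟩ : ∃ k, r = k + 1 := ⟨r - 1, by omega⟩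
  rw [show 3 * (k + 1) - 2 = 3 * k + 1 by omega] at hsplit ⊢
  generalize t - 1 = s at hsplit ⊢
  rw [Nat.add_sub_cancel]
  linarith

lemma isEdgeMap_starForest : IsEdgeMap (starForest t r) (Sym2.map leafShift) := by
  rw [IsEdgeMap, edgeSet_starForest]
  rintro _ ⟨l, hl, rfl⟩
  have hl' : (l : ℕ) % (3 * r - 2) ≠ 0 := mt blockCenter_eq_self_iff.2 hl
  rw [Sym2.map_mk, leafShift_of_mod_eq_zero (blockCenter_mod l), ← blockCenter_leafShift]
  refine ⟨⟨leafShift l, ?_, rfl⟩, ?_⟩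
  · rw [Set.mem_ofPred_eq, Ne, blockCenter_eq_self_iff, leafShift_mod]
    exact tripleSucc_ne_zero hl'
  · rw [blockCenter_leafShift, Ne, Sym2.congr_right]
    intro h
    exact tripleSucc_ne_self hl' (by rw [← leafShift_mod, h])

lemma noFreeCopy_starForest (hr : 2 ≤ r) :
    NoFreeCopy (starG r) (starForest t r) (Sym2.map leafShift) := by
  refine noFreeCopy_starG_of_forall fun c g hg => ?_
  have hc : blockCenter c = c := by
    by_contra hc
    have h01 := (eq_blockCenter_of_adj hc (hg ⟨0, by omega⟩)).trans
      (eq_blockCenter_of_adj hc (hg ⟨1, by omega⟩)).symm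
    simp [Fin.ext_iff] at h01
  have hcenter : ∀ i, blockCenter (g i) = c := fun i => blockCenter_eq_of_adj hc (hg i)
  have hleaf : ∀ i, (g i : ℕ) % (3 * r - 2) ≠ 0 := fun i h =>
    (hg i).ne ((hcenter i).symm.trans (blockCenter_eq_self_iff.2 h))
  -- `r` leaves of the block of `c`, but only `r - 1` triples of leaf positions
  obtain ⟨i, -, j, -, hij, htriple⟩ := exists_ne_map_eq_of_card_lt_of_maps_to
    (s := univ) (t := range (r - 1)) (f := fun i => ((g i : ℕ) % (3 * r - 2) - 1) / 3)
    (by simp; omega)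
    (fun i _ => by have := Nat.mod_lt (g i : ℕ) (by omega : 0 < 3 * r - 2); simp; omega)
  have hmod : (g i : ℕ) % (3 * r - 2) ≠ g j % (3 * r - 2) := fun h =>
    hij (g.injective (eq_of_div_eq_of_mod_eq
      (blockCenter_eq_blockCenter_iff.1 ((hcenter i).trans (hcenter j).symm)) h))
  have hshift : ∀ {i j}, tripleSucc ((g i : ℕ) % (3 * r - 2)) = g j % (3 * r - 2) →
      Sym2.map leafShift s(c, g i) = s(c, g j) := fun h => by
    rw [Sym2.map_mk, leafShift_of_mod_eq_zero (blockCenter_eq_self_iff.1 hc),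
      leafShift_eq_of ((hcenter _).trans (hcenter _).symm) h]
  rcases tripleSucc_or_tripleSucc (hleaf i) (hleaf j) hmod htriple with h | h
  exacts [⟨i, j, hshift h⟩, ⟨j, i, hshift h⟩]

lemma not_contains_matching_starForest (hr : 1 ≤ r) (ht : 1 ≤ t) :
    ¬ Contains (matching t) (starForest t r) := by
  classical
  refine not_contains_matching_of_forall_adj_mem {v | blockCenter v = v} (fun v w h => ?_) ?_
  · rcases (starForest_adj.1 h).2 with rfl | rfl
    · exact Or.inl (by simp [blockCenter_blockCenter])
    · exact Or.inr (by simp [blockCenter_blockCenter])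
  · rw [card_filter_blockCenter_eq_self (by omega)]
    omega

end StarForest

/-- the disjoint union of t-1 stars K_{1,3(r-1)} admits an edge mapping
with no f-free K_{1,r}, contains no tK₂; consequently, if r ≥ 2t+1 and
ex(n,{K_{1,r},tK₂}) = (r-1)(t-1), then h(n,{K_{1,r},tK₂}) = 3(r-1)(t-1) for
n ≥ (t-1)(3r-2). -/
theorem stmt16 (r t : ℕ) (hr : 2 ≤ r) (ht : 1 ≤ t) :
    (∃ f, IsEdgeMap (starForest t r) f ∧ NoFreeCopy (starG r) (starForest t r) f) ∧
    ¬ Contains (matching t) (starForest t r) ∧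
    (2*t+1 ≤ r → ∀ n, (t-1)*(3*r-2) ≤ n →
      exNum2 n (starG r) (matching t) = (r-1)*(t-1) →
      hNum2 n (starG r) (matching t) = 3*((r-1)*(t-1))) := by
  have hmatch := not_contains_matching_starForest (r := r) (by omega) ht
  refine ⟨⟨_, isEdgeMap_starForest, noFreeCopy_starForest hr⟩, hmatch, fun _ n hn hex => ?_⟩
  refine le_antisymm (hex ▸ hNum2_le_three_mul_exNum2 n _ _) ?_
  let ι := Fin.castLEEmb hn
  calc 3 * ((r - 1) * (t - 1)) = ((starForest t r).map ι).edgeSet.ncard := by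
        rw [edgeSet_map, Set.ncard_image_of_injective _ ι.sym2Map.injective,
          ncard_edgeSet_starForest (by omega)]
    _ ≤ hNum2 n (starG r) (matching t) :=
      le_hNum2 (isEdgeMap_starForest.map ι)
        ((noFreeCopy_starForest hr).map (starG_exists_adj (by omega)) ι)
        ((NoFreeCopy.of_not_contains hmatch _).map matching_exists_adj ι)
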